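/- Let G be an undirected graph and x, y, z three distinct vertices. Construct G̃ from G by subdividing every edge with one new vertex, splitting z into two copies z₁, z₂ each adjacent (via the subdivided structure) to the same neighbors as z, and adding a new edge {z₁, z₂}. Then a cycle in G̃ has odd length if and only if it contains the edge {z₁, z₂}; consequently, there is a cycle in G through all of x, y, z if and only if there is an odd cycle in G̃ through both x and y. -/

import Mathlib

/-!
Colour the copies of original vertices of `G̃` with `false` and the subdivision vertices with
`true`. Every edge other than `{z₁, z₂}` joins the two colour classes, so a cycle avoiding that
edge is even, while a cycle through it consists of that edge and an even path between the two
copies of `z`.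

A cycle of `G` through `z`, subdivided and with one of its two edges at `z` reattached to `z₂`,
is a cycle of `G̃` through `{z₁, z₂}`, hence odd. Conversely, an odd cycle minus `{z₁, z₂}` is a
path from `z₂` to `z₁`; past its first subdivision vertex it visits no second copy, so it is the
subdivision of a path of `G` ending at `z`, which that first edge closes to a cycle through `z`,
unless the path is `z₂ – e – z₁`, which misses `x ≠ z`.
-/

/-- The vertex type of the auxiliary graph `G̃`: pairs `(v, b)` where `(v, false)`
is the standard copy of an original vertex `v` (and `(z, true)` is the second
copy of the split vertex `z`), together with one subdivision vertex for each
edge of `G`. -/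
def TildeVert (V : Type*) (G : SimpleGraph V) : Type _ :=
  (V × Bool) ⊕ G.edgeSet

/-- The base relation of the auxiliary graph: a copy of an original vertex is
joined to the subdivision vertex of each incident edge (both copies of `z` are
joined to the subdivision vertices of the edges incident to `z`), and the two
copies of `z` are joined by an extra edge. -/
def tildeRel {V : Type*} (G : SimpleGraph V) (z : V) :
    TildeVert V G → TildeVert V G → Prop
  | Sum.inl (u, b), Sum.inl (u', b') => u = z ∧ u' = z ∧ b ≠ b'
  | Sum.inl (u, b), Sum.inr e => u ∈ e.val ∧ (u ≠ z → b = false)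
  | Sum.inr _, _ => False

/-- The auxiliary graph `G̃` obtained from `G` by subdividing every edge,
splitting `z` into two copies, and adding an edge between the two copies. -/
def tildeGraph {V : Type*} (G : SimpleGraph V) (z : V) :
    SimpleGraph (TildeVert V G) :=
  SimpleGraph.fromRel (tildeRel G z)

namespace SimpleGraph.Walk

variable {W : Type*} {H : SimpleGraph W}

lemma IsPath.fst_ne_of_mem_darts {a b : W} {P : H.Walk a b} (hP : P.IsPath) {d : H.Dart}
    (hd : d ∈ P.darts) : d.fst ≠ b := by
  have hnodup := hP.support_nodup
  rw [← map_fst_darts_append, List.nodup_append] at hnodup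
  exact hnodup.2.2 _ (List.mem_map_of_mem hd) _ (List.mem_singleton_self _)

lemma IsCycle.exists_isPath_of_mem_darts {u a b : W} {C : H.Walk u u} (hC : C.IsCycle)
    {hab : H.Adj a b} (hd : ⟨(a, b), hab⟩ ∈ C.darts) :
    ∃ P : H.Walk b a, P.IsPath ∧ s(a, b) ∉ P.edges ∧ P.length + 1 = C.length ∧
      C.support ⊆ P.support := by
  classical
  have ha : a ∈ C.support := C.dart_fst_mem_support_of_mem_darts hd
  have hC' := hC.rotate ha
  have hd' := (C.rotate_darts a ha).mem_iff.mpr hd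
  have hlen := C.length_rotate a ha
  have hsupp : C.support ⊆ (C.rotate a ha).support := fun w hw =>
    (C.mem_support_rotate_iff a ha).mpr hw
  generalize C.rotate a ha = C' at *
  cases C' with
  | nil => simp at hd'
  | cons h P =>
    obtain ⟨hP, hedge⟩ := (cons_isCycle_iff P h).mp hC'
    rw [darts_cons, List.mem_cons] at hd'
    rcases hd' with hd' | hd'
    · obtain rfl : b = _ := congrArg (fun d : H.Dart => d.snd) hd'
      refine ⟨P, hP, hedge, hlen, fun w hw => ?_⟩
      rcases List.mem_cons.mp (hsupp hw) with rfl | hw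
      · exact P.end_mem_support
      · exact hw
    · exact absurd rfl (hP.fst_ne_of_mem_darts hd')

lemma IsCycle.exists_isPath_of_mem_edges {u a b : W} {C : H.Walk u u} (hC : C.IsCycle)
    (he : s(a, b) ∈ C.edges) :
    ∃ P : H.Walk b a, P.IsPath ∧ s(a, b) ∉ P.edges ∧ P.length + 1 = C.length ∧
      C.support ⊆ P.support := by
  obtain ⟨⟨⟨a', b'⟩, h⟩, hd, hde⟩ := List.mem_map.mp he
  rcases Sym2.eq_iff.mp hde with ⟨rfl, rfl⟩ | ⟨rfl, rfl⟩
  · exact hC.exists_isPath_of_mem_darts hd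
  · obtain ⟨P, hP, hPe, hlen, hsupp⟩ := hC.reverse.exists_isPath_of_mem_darts (hab := h.symm)
      (by rw [darts_reverse, List.mem_reverse]; exact List.mem_map_of_mem (f := Dart.symm) hd)
    refine ⟨P, hP, hPe, by rwa [length_reverse] at hlen, fun w hw => hsupp ?_⟩
    rwa [support_reverse, List.mem_reverse]

end SimpleGraph.Walk

attribute [reducible] TildeVert

section

open SimpleGraph Walk

variable {V : Type*} {G : SimpleGraph V} {z : V}

lemma tildeGraph_adj_inl_inl {u u' : V} {b b' : Bool} :
    (tildeGraph G z).Adj (.inl (u, b)) (.inl (u', b')) ↔ u = z ∧ u' = z ∧ b ≠ b' := by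
  simp only [tildeGraph, fromRel_adj, tildeRel]
  grind

lemma tildeGraph_adj_inl_inr {u : V} {b : Bool} {e : G.edgeSet} :
    (tildeGraph G z).Adj (.inl (u, b)) (.inr e) ↔ u ∈ e.val ∧ (u ≠ z → b = false) := by
  simp [tildeGraph, tildeRel]

lemma tildeGraph_not_adj_inr_inr {e e' : G.edgeSet} :
    ¬ (tildeGraph G z).Adj (.inr e) (.inr e') := by
  simp [tildeGraph, tildeRel]

def tildeColoring (G : SimpleGraph V) (z : V) :
    ((tildeGraph G z).deleteEdges {s(.inl (z, false), .inl (z, true))}).Coloring Bool :=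
  Coloring.mk Sum.isRight fun {a b} hab => by
    obtain ⟨hab, hne⟩ := deleteEdges_adj.mp hab
    rcases a with ⟨u, bu⟩ | e <;> rcases b with ⟨u', bu'⟩ | e' <;> simp
    · obtain ⟨rfl, rfl, hb⟩ := tildeGraph_adj_inl_inl.mp hab
      cases bu <;> cases bu' <;> simp_all [Sym2.eq_swap]
    · exact tildeGraph_not_adj_inr_inr hab

lemma tildeGraph_adj_inl_edge {a w : V} (h : G.Adj a w) {b : Bool} (hb : a ≠ z → b = false) :
    (tildeGraph G z).Adj (.inl (a, b)) (.inr ⟨s(a, w), h⟩) :=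
  tildeGraph_adj_inl_inr.mpr ⟨Sym2.mem_mk_left a w, hb⟩

lemma tildeGraph_adj_edge_inl {a w : V} (h : G.Adj a w) :
    (tildeGraph G z).Adj (.inr ⟨s(a, w), h⟩) (.inl (w, false)) :=
  (tildeGraph_adj_inl_inr.mpr ⟨Sym2.mem_mk_right a w, fun _ => rfl⟩).symm

namespace SimpleGraph.Walk

lemma IsCycle.odd_length_iff_mem_edges_tildeGraph {u : TildeVert V G}
    {C : (tildeGraph G z).Walk u u} (hC : C.IsCycle) :
    Odd C.length ↔ s(.inl (z, false), .inl (z, true)) ∈ C.edges := by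
  constructor
  · intro hodd
    by_contra hz
    have heven := (tildeColoring G z).even_length_iff_congr (C.toDeleteEdge _ hz)
    simp only [length_transfer, iff_self, iff_true] at heven
    exact Nat.not_even_iff_odd.mpr hodd heven
  · intro hz
    obtain ⟨P, -, hPz, hlen, -⟩ := hC.exists_isPath_of_mem_edges hz
    have heven := (tildeColoring G z).even_length_iff_congr (P.toDeleteEdge _ hPz)
    simp only [length_transfer] at heven
    rw [← hlen]
    exact (heven.mpr Iff.rfl).add_one

def toTilde (z : V) : ∀ {a b : V}, G.Walk a b →
    (tildeGraph G z).Walk (.inl (a, false)) (.inl (b, false))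
  | _, _, nil => nil
  | _, _, cons h p =>
      cons (tildeGraph_adj_inl_edge h fun _ => rfl)
        (cons (tildeGraph_adj_edge_inl h) (p.toTilde z))

@[simp]
lemma toTilde_nil {a : V} : (nil : G.Walk a a).toTilde z = nil := rfl

lemma toTilde_cons {a w b : V} (h : G.Adj a w) (p : G.Walk w b) :
    (cons h p).toTilde z =
      cons (tildeGraph_adj_inl_edge h fun _ => rfl)
        (cons (tildeGraph_adj_edge_inl h) (p.toTilde z)) :=
  rfl

lemma inl_mem_support_toTilde_iff {a b v : V} {c : Bool} (p : G.Walk a b) :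
    .inl (v, c) ∈ (p.toTilde z).support ↔ v ∈ p.support ∧ c = false := by
  induction p with
  | nil => simp
  | cons h p ih => simp [toTilde_cons, ih, or_and_right]

lemma inr_mem_support_toTilde_iff {a b : V} {e : G.edgeSet} (p : G.Walk a b) :
    .inr e ∈ (p.toTilde z).support ↔ e.val ∈ p.edges := by
  induction p with
  | nil => simp
  | cons h p ih => simp [toTilde_cons, ih, Subtype.ext_iff, eq_comm]

lemma isPath_toTilde_iff {a b : V} (p : G.Walk a b) : (p.toTilde z).IsPath ↔ p.IsPath := by
  induction p with
  | nil => simp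
  | cons h p ih =>
    simp only [toTilde_cons, cons_isPath_iff, ih, support_cons, List.mem_cons,
      inl_mem_support_toTilde_iff, inr_mem_support_toTilde_iff, reduceCtorEq, false_or, and_true]
    exact ⟨fun ⟨⟨hp, _⟩, hu⟩ => ⟨hp, hu⟩,
      fun ⟨hp, hu⟩ => ⟨⟨hp, fun he => hu (p.fst_mem_support_of_mem_edges he)⟩, hu⟩⟩

lemma exists_toTilde_eq {a b : V} :
    ∀ (P : (tildeGraph G z).Walk (.inl (a, false)) (.inl (b, false))), P.IsPath →
      .inl (z, true) ∉ P.support → ∃ Q : G.Walk a b, Q.toTilde z = P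
  | nil, _, _ => ⟨nil, rfl⟩
  | cons h₁ nil, _, _ => by simp [tildeGraph_adj_inl_inl] at h₁
  | cons (v := .inl (v, c)) h₁ (cons _ _), _, hz => by
    obtain ⟨rfl, rfl, hc⟩ := tildeGraph_adj_inl_inl.mp h₁
    obtain rfl : c = true := by simpa using hc.symm
    exact absurd (by simp) hz
  | cons (v := .inr _) _ (cons (v := .inr _) h₂ _), _, _ =>
    absurd h₂ tildeGraph_not_adj_inr_inr
  | cons (v := .inr _) _ (cons (v := .inl (c, true)) h₂ _), _, hz => by
    obtain rfl : c = z := by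
      by_contra hcz
      simpa using (tildeGraph_adj_inl_inr.mp h₂.symm).2 hcz
    exact absurd (by simp) hz
  | cons (v := .inr e) h₁ (cons (v := .inl (c, false)) h₂ P₂), hP, hz => by
    have hac : a ≠ c := by
      rintro rfl
      simp [cons_isPath_iff] at hP
    have he : e.val = s(a, c) :=
      (Sym2.mem_and_mem_iff hac).mp
        ⟨(tildeGraph_adj_inl_inr.mp h₁).1, (tildeGraph_adj_inl_inr.mp h₂.symm).1⟩
    have hadj : G.Adj a c := G.mem_edgeSet.mp (he ▸ e.prop)
    obtain rfl : e = ⟨s(a, c), hadj⟩ := Subtype.ext he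
    obtain ⟨Q, hQ⟩ := exists_toTilde_eq P₂ hP.of_cons.of_cons (by simp_all)
    exact ⟨cons hadj Q, by rw [toTilde_cons, hQ]⟩

lemma IsCycle.exists_odd_isCycle_tildeGraph {u : V} {C : G.Walk u u}
    (hC : C.IsCycle) (hz : z ∈ C.support) :
    ∃ C' : (tildeGraph G z).Walk (.inl (z, false)) (.inl (z, false)), C'.IsCycle ∧
      Odd C'.length ∧ ∀ v ∈ C.support, .inl (v, false) ∈ C'.support := by
  obtain ⟨e, he, hze⟩ := (mem_support_iff_exists_mem_edges_of_not_nil hC.not_nil).mp hz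
  obtain ⟨w, rfl⟩ := Sym2.mem_iff_exists.mp hze
  have h : G.Adj z w := C.adj_of_mem_edges he
  obtain ⟨p, hp, hzw, -, hsupp⟩ := hC.exists_isPath_of_mem_edges he
  have hz₂ : (.inl (z, true) : TildeVert V G) ∉ (p.toTilde z).support := by
    simp [inl_mem_support_toTilde_iff]
  let T : (tildeGraph G z).Walk (.inl (z, true)) (.inl (z, false)) :=
    cons (tildeGraph_adj_inl_edge h nofun) (cons (tildeGraph_adj_edge_inl h) (p.toTilde z))
  have hT : T.IsPath := by
    simp [T, cons_isPath_iff, isPath_toTilde_iff, inr_mem_support_toTilde_iff, hp, hzw, hz₂]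
  have hTz : s(.inl (z, false), .inl (z, true)) ∉ T.edges := by
    simp only [T, edges_cons, List.mem_cons, Sym2.eq_iff, reduceCtorEq, false_and, and_false,
      or_false, false_or]
    exact fun he => hz₂ ((p.toTilde z).snd_mem_support_of_mem_edges he)
  have hT' : (cons (tildeGraph_adj_inl_inl.mpr ⟨rfl, rfl, Bool.false_ne_true⟩) T).IsCycle :=
    (cons_isCycle_iff T _).mpr ⟨hT, hTz⟩
  refine ⟨_, hT', hT'.odd_length_iff_mem_edges_tildeGraph.mpr (by simp), fun v hv => ?_⟩
  simp [T, inl_mem_support_toTilde_iff, hsupp hv]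

lemma exists_isCycle_of_isPath_tildeGraph {x : V} (hxz : x ≠ z) :
    ∀ (P : (tildeGraph G z).Walk (.inl (z, true)) (.inl (z, false))), P.IsPath →
      s(.inl (z, false), .inl (z, true)) ∉ P.edges → .inl (x, false) ∈ P.support →
      ∃ C : G.Walk z z, C.IsCycle ∧ ∀ v, .inl (v, false) ∈ P.support → v ∈ C.support
  | cons (v := .inl (v, c)) h₁ _, _, hPz, _ => by
    obtain ⟨-, rfl, hc⟩ := tildeGraph_adj_inl_inl.mp h₁
    obtain rfl : c = false := by simpa using hc.symm
    simp [Sym2.eq_swap] at hPz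
  | cons (v := .inr _) _ (cons (v := .inr _) h₂ _), _, _, _ =>
    absurd h₂ tildeGraph_not_adj_inr_inr
  | cons (v := .inr _) _ (cons (v := .inl (c, true)) h₂ _), hP, _, _ => by
    obtain rfl : c = z := by
      by_contra hcz
      simpa using (tildeGraph_adj_inl_inr.mp h₂.symm).2 hcz
    simp at hP
  | cons (v := .inr e) h₁ (cons (v := .inl (c, false)) h₂ P₂), hP, _, hx => by
    simp only [cons_isPath_iff, support_cons, List.mem_cons, not_or] at hP
    obtain ⟨Q, rfl⟩ := exists_toTilde_eq P₂ hP.1.1 hP.2.2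
    have hQ : Q.IsPath := (isPath_toTilde_iff Q).mp hP.1.1
    have hmem : ∀ v, .inl (v, false) ∈ (cons h₁ (cons h₂ (Q.toTilde z))).support →
        v ∈ Q.support := by
      intro v hv
      simpa [inl_mem_support_toTilde_iff] using hv
    have hcz : c ≠ z := by
      rintro rfl
      simpa [(isPath_iff_nil.mp hQ).eq_nil, hxz] using hmem x hx
    have he : e.val = s(z, c) :=
      (Sym2.mem_and_mem_iff hcz.symm).mp
        ⟨(tildeGraph_adj_inl_inr.mp h₁).1, (tildeGraph_adj_inl_inr.mp h₂.symm).1⟩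
    have hadj : G.Adj z c := G.mem_edgeSet.mp (he ▸ e.prop)
    refine ⟨cons hadj Q, (cons_isCycle_iff Q hadj).mpr ⟨hQ, fun hzc => hP.1.2 ?_⟩,
      fun v hv => List.mem_cons_of_mem _ (hmem v hv)⟩
    rwa [inr_mem_support_toTilde_iff, he]

lemma IsCycle.exists_isCycle_of_odd_tildeGraph {u : TildeVert V G}
    {C : (tildeGraph G z).Walk u u} (hC : C.IsCycle) (hodd : Odd C.length) {x : V} (hxz : x ≠ z)
    (hx : .inl (x, false) ∈ C.support) :
    ∃ C' : G.Walk z z, C'.IsCycle ∧ ∀ v, .inl (v, false) ∈ C.support → v ∈ C'.support := by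
  obtain ⟨P, hP, hPz, -, hsupp⟩ :=
    hC.exists_isPath_of_mem_edges (hC.odd_length_iff_mem_edges_tildeGraph.mp hodd)
  obtain ⟨C', hC', hmem⟩ := exists_isCycle_of_isPath_tildeGraph hxz P hP hPz (hsupp hx)
  exact ⟨C', hC', fun v hv => hmem v (hsupp hv)⟩

end SimpleGraph.Walk

end

theorem stmt_16_general {V : Type*} (G : SimpleGraph V) (x y z : V)
    (hxz : x ≠ z) :
    (∀ (u : TildeVert V G) (C : (tildeGraph G z).Walk u u), C.IsCycle →
        (Odd C.length ↔
          s(Sum.inl (z, false), Sum.inl (z, true)) ∈ C.edges)) ∧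
      ((∃ (u : V) (C : G.Walk u u), C.IsCycle ∧ x ∈ C.support ∧ y ∈ C.support ∧
          z ∈ C.support) ↔
        (∃ (u : TildeVert V G) (C : (tildeGraph G z).Walk u u), C.IsCycle ∧
          Sum.inl (x, false) ∈ C.support ∧ Sum.inl (y, false) ∈ C.support ∧
          Odd C.length)) := by
  refine ⟨fun _ _ hC => hC.odd_length_iff_mem_edges_tildeGraph, ⟨?_, ?_⟩⟩
  · rintro ⟨_, C, hC, hx, hy, hz⟩
    obtain ⟨C', hC', hodd, hsupp⟩ := hC.exists_odd_isCycle_tildeGraph hz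
    exact ⟨_, C', hC', hsupp x hx, hsupp y hy, hodd⟩
  · rintro ⟨_, C, hC, hx, hy, hodd⟩
    obtain ⟨C', hC', hsupp⟩ := hC.exists_isCycle_of_odd_tildeGraph hodd hxz hx
    exact ⟨z, C', hC', hsupp x hx, hsupp y hy, C'.start_mem_support⟩

theorem stmt_16 {V : Type*} (G : SimpleGraph V) (x y z : V)
    (hxy : x ≠ y) (hxz : x ≠ z) (hyz : y ≠ z) :
    (∀ (u : TildeVert V G) (C : (tildeGraph G z).Walk u u), C.IsCycle →
        (Odd C.length ↔
          s(Sum.inl (z, false), Sum.inl (z, true)) ∈ C.edges)) ∧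
      ((∃ (u : V) (C : G.Walk u u), C.IsCycle ∧ x ∈ C.support ∧ y ∈ C.support ∧
          z ∈ C.support) ↔
        (∃ (u : TildeVert V G) (C : (tildeGraph G z).Walk u u), C.IsCycle ∧
          Sum.inl (x, false) ∈ C.support ∧ Sum.inl (y, false) ∈ C.support ∧
          Odd C.length)) :=
  stmt_16_general G x y z hxz
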